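/- arXiv:2407.16967 — 2 statements merged into one kernel-verified Lean document; each statement's English description precedes it below -/
import Mathlib

section
/- Fix an integer j > 2 and let μ = ⨂_{n∈ℕ} m_n be the product probability measure on 2^ℕ with m_n({1}) = (j−1)/j if j divides n and m_n({1}) = 1/j otherwise. For x ∈ 2^ℕ with infinitely many 1s, let n_0(x) < n_1(x) < ⋯ enumerate {n : x(n) = 1}, let r(n) = 1/(j−1) if j ∣ n and r(n) = j−1 otherwise, and set C_k(x) = ∏_{i=0}^{k−1} r(n_i(x)). Then for μ-almost every x ∈ 2^ℕ, x has infinitely many 1s and limsup_{k→∞} C_k(x) = +∞ and liminf_{k→∞} C_k(x) = 0. -/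
open MeasureTheory Filter Set ENNReal

/-- `μ` is the product of the marginal measures `m n` on `Bool`. -/
def IsProductMeasure (μ : Measure (ℕ → Bool)) (m : ℕ → Measure Bool) : Prop :=
  ∀ (s : Finset ℕ) (a : ℕ → Bool),
    μ {x | ∀ n ∈ s, x n = a n} = ∏ n ∈ s, m n {a n}

/-- The multiplicative jump `m n {0} / m n {1}` of the period-`j` measure:
`1/(j-1)` if `j ∣ n`, and `j-1` otherwise. -/
noncomputable def rPeriod (j n : ℕ) : ℝ≥0∞ :=
  if j ∣ n then ((j : ℝ≥0∞) - 1)⁻¹ else (j : ℝ≥0∞) - 1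

/-! Write `C_k = (j - 1) ^ L_k`, where `L_k` counts the first `k` ones of `x` with sign `-1` at
multiples of `j` and `+1` elsewhere. Read along all coordinates, `L (count n)` is
`∑_{k<n} ε_k 1{x k = 1}` with `ε_k = ±1`, whose mean `n / j - ⌈n / j⌉` stays within `1` of `0`.
Subtracting it leaves a martingale with increments between `1 / j` and `1` in absolute value.
It cannot converge, and a martingale with bounded increments that does not converge is a.s.
unbounded above and below. Hence so is `L`: `x` has infinitely many ones and `C_k` has
`limsup = ∞`, `liminf = 0`. -/

open ProbabilityTheory

theorem not_tendsto_nhds_of_le_abs_sub {u : ℕ → ℝ} {δ : ℝ} (hδ : 0 < δ)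
    (hu : ∀ n, δ ≤ |u (n + 1) - u n|) (c : ℝ) : ¬Tendsto u atTop (nhds c) := by
  intro hc
  obtain ⟨N, hN⟩ := Metric.tendsto_atTop.1 hc (δ / 2) (half_pos hδ)
  have h₁ := hN (N + 1) (Nat.le_succ N)
  have h₂ := hN N le_rfl
  rw [Real.dist_eq] at h₁ h₂
  have := abs_sub_le (u (N + 1)) c (u N)
  linarith [hu N, abs_sub_comm c (u N)]

theorem frequently_atTop_le_of_not_bddAbove {α : Type*} [LinearOrder α] {g : ℕ → α}
    (hg : ¬BddAbove (range g)) (K : α) : ∃ᶠ k in atTop, K ≤ g k := by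
  by_contra h
  rw [not_frequently] at h
  exact hg (isBoundedUnder_of_eventually_le (h.mono fun k hk => (not_le.1 hk).le)).bddAbove_range

theorem frequently_atTop_le_of_not_bddBelow {α : Type*} [LinearOrder α] {g : ℕ → α}
    (hg : ¬BddBelow (range g)) (K : α) : ∃ᶠ k in atTop, g k ≤ K :=
  frequently_atTop_le_of_not_bddAbove (α := αᵒᵈ) hg K

theorem not_bddAbove_intCast_of_abs_sub_le {f : ℕ → ℝ} {g : ℕ → ℤ} {C : ℝ}
    (hfg : ∀ n, |f n - g n| ≤ C) (hf : ¬BddAbove (range f)) : ¬BddAbove (range g) := by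
  rintro ⟨B, hB⟩
  refine hf ⟨B + C, forall_mem_range.2 fun n => ?_⟩
  have hgB : (g n : ℝ) ≤ B := by exact_mod_cast hB (mem_range_self n)
  linarith [(abs_le.1 (hfg n)).2]

theorem not_bddBelow_intCast_of_abs_sub_le {f : ℕ → ℝ} {g : ℕ → ℤ} {C : ℝ}
    (hfg : ∀ n, |f n - g n| ≤ C) (hf : ¬BddBelow (range f)) : ¬BddBelow (range g) := by
  rintro ⟨B, hB⟩
  refine hf ⟨B - C, forall_mem_range.2 fun n => ?_⟩
  have hgB : (B : ℝ) ≤ g n := by exact_mod_cast hB (mem_range_self n)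
  linarith [(abs_le.1 (hfg n)).1]

namespace ENNReal

theorem one_lt_natCast_sub_one {j : ℕ} (hj : 2 < j) : 1 < (j : ℝ≥0∞) - 1 := by
  rw [← Nat.cast_one, ← ENNReal.natCast_sub, Nat.cast_lt]
  omega

theorem prod_zpow {ι : Type*} {b : ℝ≥0∞} (hb₀ : b ≠ 0) (hb : b ≠ ⊤) (s : Finset ι)
    (f : ι → ℤ) : ∏ i ∈ s, b ^ f i = b ^ ∑ i ∈ s, f i := by
  classical
  induction s using Finset.induction_on with
  | empty => simp
  | insert i s hi ih =>
    rw [Finset.prod_insert hi, Finset.sum_insert hi, ih, ENNReal.zpow_add hb₀ hb]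

theorem limsup_zpow_eq_top {b : ℝ≥0∞} (hb : 1 < b) {g : ℕ → ℤ} (hg : ¬BddAbove (range g)) :
    limsup (fun k => b ^ g k) atTop = ⊤ := by
  refine eq_top_iff.2 (le_of_tendsto' (ENNReal.tendsto_pow_atTop_nhds_top_iff.2 hb) fun n => ?_)
  refine le_limsup_of_frequently_le'
    ((frequently_atTop_le_of_not_bddAbove hg n).mono fun k hk => ?_)
  rw [← zpow_natCast]
  exact ENNReal.zpow_le_of_le hb.le hk

theorem liminf_zpow_eq_zero {b : ℝ≥0∞} (hb : 1 < b) {g : ℕ → ℤ} (hg : ¬BddBelow (range g)) :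
    liminf (fun k => b ^ g k) atTop = 0 := by
  refine le_antisymm (ge_of_tendsto'
    (ENNReal.tendsto_pow_atTop_nhds_zero_of_lt_one (ENNReal.inv_lt_one.2 hb)) fun n => ?_) bot_le
  refine liminf_le_of_frequently_le'
    ((frequently_atTop_le_of_not_bddBelow hg (-n)).mono fun k hk => ?_)
  rw [← ENNReal.inv_pow, ← zpow_natCast, ← ENNReal.zpow_neg]
  exact ENNReal.zpow_le_of_le hb.le hk

end ENNReal

namespace Nat

theorem sum_range_ite_eq_sum_range_count {M : Type*} [AddCommMonoid M] (p : ℕ → Prop)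
    [DecidablePred p] (f : ℕ → M) (n : ℕ) :
    ∑ k ∈ Finset.range n, (if p k then f k else 0)
      = ∑ i ∈ Finset.range (count p n), f (nth p i) := by
  induction n with
  | zero => simp
  | succ n ih =>
    rw [Finset.sum_range_succ, ih, count_succ]
    split_ifs with h
    · rw [Finset.sum_range_succ, nth_count h]
    · rw [add_zero, add_zero]

theorem infinite_setOf_of_not_bddAbove_comp_count {α : Type*} [LinearOrder α]
    {p : ℕ → Prop} [DecidablePred p] {g : ℕ → α}
    (hg : ¬BddAbove (range fun n => g (count p n))) : {n | p n}.Infinite := by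
  intro hfin
  have : Nonempty α := ⟨g 0⟩
  refine hg (((Set.finite_Iic hfin.toFinset.card).image g).bddAbove.mono ?_)
  rintro _ ⟨n, rfl⟩
  exact mem_image_of_mem g (count_le_card hfin n)

theorem abs_div_sub_count_dvd_le_one {j : ℕ} (hj : 0 < j) (n : ℕ) :
    |(n : ℝ) / j - count (j ∣ ·) n| ≤ 1 := by
  have hcount : n / j ≤ count (j ∣ ·) n ∧ count (j ∣ ·) n ≤ n / j + 1 := by
    have h := count_modEq_card (b := n) hj 0
    simp only [modEq_zero_iff_dvd] at h
    split_ifs at h <;> omega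
  have hdiv : (n : ℝ) / j = (n / j : ℕ) + (n % j : ℕ) / j := by
    have hn : (n : ℝ) = j * (n / j : ℕ) + (n % j : ℕ) := by
      exact_mod_cast (div_add_mod n j).symm
    rw [hn]
    field_simp
  have hr : ((n % j : ℕ) : ℝ) / j < 1 := by
    rw [div_lt_one (by positivity)]
    exact_mod_cast mod_lt n hj
  have hr₀ : 0 ≤ ((n % j : ℕ) : ℝ) / j := by positivity
  have hlo : ((n / j : ℕ) : ℝ) ≤ count (j ∣ ·) n := by exact_mod_cast hcount.1
  have hhi : (count (j ∣ ·) n : ℝ) ≤ (n / j : ℕ) + 1 := by exact_mod_cast hcount.2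
  rw [hdiv, abs_le]
  constructor <;> linarith

end Nat

namespace MeasureTheory

open MeasurableSpace

variable {Ω : Type*} {mΩ : MeasurableSpace Ω} {μ : Measure Ω}

def Filtration.eventsBefore (s : ℕ → Set Ω) (hs : ∀ n, MeasurableSet (s n)) :
    Filtration ℕ mΩ where
  seq n := generateFrom {t | ∃ k < n, s k = t}
  mono' _ _ hnm := generateFrom_mono fun _ ⟨k, hk, hkt⟩ => ⟨k, hk.trans_le hnm, hkt⟩
  le' _ := generateFrom_le fun _ ⟨k, _, hkt⟩ => hkt ▸ hs k

noncomputable def compensatedSum (μ : Measure Ω) (s : ℕ → Set Ω) (c : ℕ → ℝ) (n : ℕ)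
    (ω : Ω) : ℝ :=
  ∑ k ∈ Finset.range n, c k * ((s k).indicator 1 ω - μ.real (s k))

theorem compensatedSum_succ_sub (s : ℕ → Set Ω) (c : ℕ → ℝ) (n : ℕ) :
    compensatedSum μ s c (n + 1) - compensatedSum μ s c n
      = fun ω => c n * ((s n).indicator 1 ω - μ.real (s n)) := by
  ext ω
  simp [compensatedSum, Finset.sum_range_succ]

theorem martingale_compensatedSum {s : ℕ → Set Ω} (hs : ∀ n, MeasurableSet (s n))
    (hind : iIndepSet s μ) (c : ℕ → ℝ) :
    Martingale (compensatedSum μ s c) (Filtration.eventsBefore s hs) μ := by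
  have := hind.isProbabilityMeasure
  have hterm_meas : ∀ k, Measurable[generateFrom {s k}]
      fun ω => c k * ((s k).indicator 1 ω - μ.real (s k)) := fun k =>
    ((measurable_const.indicator (measurableSet_generateFrom (mem_singleton (s k)))).sub_const
      _).const_mul _
  have hterm_int : ∀ k, Integrable (fun ω => c k * ((s k).indicator 1 ω - μ.real (s k))) μ :=
    fun k => (((integrable_const 1).indicator (hs k)).sub (integrable_const _)).const_mul _
  refine martingale_of_condExp_sub_eq_zero_nat (fun n => ?_)
    (fun n => integrable_finsetSum _ fun k _ => hterm_int k) fun n => ?_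
  · refine Finset.stronglyMeasurable_fun_sum _ fun k hk =>
      (hterm_meas k).stronglyMeasurable.mono (generateFrom_le fun t ht => ?_)
    exact measurableSet_generateFrom ⟨k, Finset.mem_range.1 hk, ht.symm⟩
  · rw [compensatedSum_succ_sub]
    refine (condExp_indep_eq (generateFrom_le fun t ht => ht ▸ hs n)
      ((Filtration.eventsBefore s hs).le n) (hterm_meas n).stronglyMeasurable
      (hind.indep_generateFrom_lt hs n)).trans (EventuallyEq.of_eq ?_)
    ext ω
    rw [integral_const_mul, integral_sub ((integrable_const 1).indicator (hs n))
      (integrable_const _), integral_indicator_one (hs n), integral_const, probReal_univ,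
      one_smul, sub_self, mul_zero, Pi.zero_apply]

theorem Martingale.ae_not_bddAbove_and_not_bddBelow [IsFiniteMeasure μ] {f : ℕ → Ω → ℝ}
    {ℱ : Filtration ℕ mΩ} (hf : Martingale f ℱ μ) {R : NNReal}
    (hbdd : ∀ᵐ ω ∂μ, ∀ i, |f (i + 1) ω - f i ω| ≤ R) {δ : ℝ} (hδ : 0 < δ)
    (hgap : ∀ᵐ ω ∂μ, ∀ i, δ ≤ |f (i + 1) ω - f i ω|) :
    ∀ᵐ ω ∂μ, ¬BddAbove (range fun n => f n ω) ∧ ¬BddBelow (range fun n => f n ω) := by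
  filter_upwards [hf.submartingale.bddAbove_iff_exists_tendsto hbdd,
    hf.bddAbove_range_iff_bddBelow_range hbdd, hgap] with ω hconv habove hω
  have hdiv : ¬BddAbove (range fun n => f n ω) := fun h =>
    let ⟨c, hc⟩ := hconv.1 h
    not_tendsto_nhds_of_le_abs_sub hδ hω c hc
  exact ⟨hdiv, fun h => hdiv (habove.2 h)⟩

theorem ae_not_bddAbove_and_not_bddBelow_compensatedSum {s : ℕ → Set Ω}
    (hs : ∀ n, MeasurableSet (s n)) (hind : iIndepSet s μ) {c : ℕ → ℝ} (hc : ∀ n, |c n| = 1)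
    {δ : ℝ} (hδ : 0 < δ) (hp : ∀ n, δ ≤ μ.real (s n) ∧ μ.real (s n) ≤ 1 - δ) :
    ∀ᵐ ω ∂μ, ¬BddAbove (range fun n => compensatedSum μ s c n ω) ∧
      ¬BddBelow (range fun n => compensatedSum μ s c n ω) := by
  have := hind.isProbabilityMeasure
  have hinc : ∀ ω i, |compensatedSum μ s c (i + 1) ω - compensatedSum μ s c i ω|
      = |(s i).indicator 1 ω - μ.real (s i)| := fun ω i => by
    rw [← Pi.sub_apply, compensatedSum_succ_sub, abs_mul, hc, one_mul]
  refine (martingale_compensatedSum hs hind c).ae_not_bddAbove_and_not_bddBelow (R := 1)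
    (ae_of_all _ fun ω i => ?_) hδ (ae_of_all _ fun ω i => ?_)
  · rw [hinc, NNReal.coe_one, abs_le]
    by_cases hω : ω ∈ s i
    · rw [indicator_of_mem hω, Pi.one_apply]
      constructor <;> linarith [hp i]
    · rw [indicator_of_notMem hω]
      constructor <;> linarith [hp i]
  · rw [hinc]
    by_cases hω : ω ∈ s i
    · rw [indicator_of_mem hω, Pi.one_apply, abs_of_nonneg (by linarith [hp i])]
      linarith [hp i]
    · rw [indicator_of_notMem hω, zero_sub, abs_neg, abs_of_nonneg (by linarith [hp i])]
      exact (hp i).1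

end MeasureTheory

namespace IsProductMeasure

variable {μ : Measure (ℕ → Bool)} {m : ℕ → Measure Bool}

theorem measure_coord_eq (hμ : IsProductMeasure μ m) (n : ℕ) (b : Bool) :
    μ {x | x n = b} = m n {b} := by
  simpa using hμ {n} fun _ => b

theorem iIndepSet_coord_eq_true (hμ : IsProductMeasure μ m) :
    iIndepSet (fun n => {x : ℕ → Bool | x n = true}) μ := by
  rw [iIndepSet_iff_meas_biInter fun n =>
    measurableSet_eq_fun (measurable_pi_apply n) measurable_const]
  intro s
  convert hμ s fun _ => true using 1
  · congr 1
    ext x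
    simp
  · exact Finset.prod_congr rfl fun n _ => hμ.measure_coord_eq n true

end IsProductMeasure

def periodSign (j n : ℕ) : ℤ := if j ∣ n then -1 else 1

theorem abs_periodSign (j n : ℕ) : |(periodSign j n : ℝ)| = 1 := by
  unfold periodSign
  split_ifs <;> simp

theorem rPeriod_eq_zpow (j n : ℕ) : rPeriod j n = ((j : ℝ≥0∞) - 1) ^ periodSign j n := by
  unfold rPeriod periodSign
  split_ifs
  · exact (zpow_neg_one _).symm
  · exact (zpow_one _).symm

noncomputable def logCocycle (j : ℕ) (p : ℕ → Prop) (k : ℕ) : ℤ :=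
  ∑ i ∈ Finset.range k, periodSign j (Nat.nth p i)

theorem prod_rPeriod_nth_eq_zpow {j : ℕ} (hj : 2 < j) (p : ℕ → Prop) (k : ℕ) :
    ∏ i ∈ Finset.range k, rPeriod j (Nat.nth p i) = ((j : ℝ≥0∞) - 1) ^ logCocycle j p k := by
  simp_rw [rPeriod_eq_zpow]
  exact ENNReal.prod_zpow (ENNReal.one_lt_natCast_sub_one hj).ne_bot
    (ne_top_of_le_ne_top (ENNReal.natCast_ne_top j) tsub_le_self) _ _

theorem compensatedSum_coord_eq_true {j : ℕ} (μ : Measure (ℕ → Bool)) (x : ℕ → Bool) (n : ℕ) :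
    compensatedSum μ (fun k => {y | y k = true}) (fun k => periodSign j k) n x
      = logCocycle j (x · = true) (Nat.count (x · = true) n)
        - ∑ k ∈ Finset.range n, (periodSign j k : ℝ) * μ.real {y | y k = true} := by
  have hterm : ∀ k, (periodSign j k : ℝ) * {y : ℕ → Bool | y k = true}.indicator 1 x
      = if x k = true then (periodSign j k : ℝ) else 0 := fun k => by
    by_cases h : x k = true <;> simp [h]
  simp only [compensatedSum, mul_sub, Finset.sum_sub_distrib, hterm,
    Nat.sum_range_ite_eq_sum_range_count, logCocycle, Int.cast_sum]

section PeriodMeasure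

variable {j : ℕ} {m : ℕ → Measure Bool} {μ : Measure (ℕ → Bool)}

theorem measureReal_coord_eq_true (hj : 0 < j)
    (hm : ∀ n, m n {true} = if j ∣ n then ((j : ℝ≥0∞) - 1) / j else 1 / (j : ℝ≥0∞))
    (hμ : IsProductMeasure μ m) (n : ℕ) :
    μ.real {x | x n = true} = if j ∣ n then 1 - 1 / (j : ℝ) else 1 / (j : ℝ) := by
  rw [measureReal_def, hμ.measure_coord_eq, hm]
  split_ifs
  · rw [ENNReal.toReal_div, ENNReal.toReal_sub_of_le (by exact_mod_cast hj)
      (ENNReal.natCast_ne_top j), ENNReal.toReal_natCast, ENNReal.toReal_one]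
    field_simp
  · simp

theorem sum_periodSign_mul_measureReal (hj : 0 < j)
    (hm : ∀ n, m n {true} = if j ∣ n then ((j : ℝ≥0∞) - 1) / j else 1 / (j : ℝ≥0∞))
    (hμ : IsProductMeasure μ m) (n : ℕ) :
    ∑ k ∈ Finset.range n, (periodSign j k : ℝ) * μ.real {x | x k = true}
      = n / j - Nat.count (j ∣ ·) n := by
  have hterm : ∀ k, (periodSign j k : ℝ) * μ.real {x | x k = true}
      = 1 / j - if j ∣ k then 1 else 0 := fun k => by
    rw [measureReal_coord_eq_true hj hm hμ, periodSign]
    split_ifs <;> push_cast <;> ring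
  simp_rw [hterm]
  rw [Finset.sum_sub_distrib, Finset.sum_const, Finset.card_range, nsmul_eq_mul,
    Finset.sum_boole, Nat.count_eq_card_filter_range]
  ring

theorem ae_not_bddAbove_and_not_bddBelow_logCocycle_count (hj : 2 < j)
    (hm : ∀ n, m n {true} = if j ∣ n then ((j : ℝ≥0∞) - 1) / j else 1 / (j : ℝ≥0∞))
    (hμ : IsProductMeasure μ m) :
    ∀ᵐ x ∂μ,
      ¬BddAbove (range fun n => logCocycle j (x · = true) (Nat.count (x · = true) n)) ∧
      ¬BddBelow (range fun n => logCocycle j (x · = true) (Nat.count (x · = true) n)) := by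
  have hj₀ : 0 < j := by omega
  have hj₂ : (2 : ℝ) ≤ j := by exact_mod_cast hj.le
  have hbounds : ∀ n, 1 / (j : ℝ) ≤ μ.real {x | x n = true} ∧
      μ.real {x | x n = true} ≤ 1 - 1 / j := fun n => by
    have h : 1 / (j : ℝ) ≤ 1 - 1 / j := by
      rw [le_sub_iff_add_le, ← add_div, div_le_one (by positivity)]
      linarith
    rw [measureReal_coord_eq_true hj₀ hm hμ]
    split_ifs <;> exact ⟨by linarith, by linarith⟩
  filter_upwards [ae_not_bddAbove_and_not_bddBelow_compensatedSum
    (fun n => measurableSet_eq_fun (measurable_pi_apply n) measurable_const)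
    hμ.iIndepSet_coord_eq_true (abs_periodSign j) (by positivity) hbounds] with x ⟨hup, hdown⟩
  have hdev : ∀ n, |compensatedSum μ (fun k => {y | y k = true}) (fun k => periodSign j k) n x
      - logCocycle j (x · = true) (Nat.count (x · = true) n)| ≤ 1 := fun n => by
    rw [compensatedSum_coord_eq_true, sum_periodSign_mul_measureReal hj₀ hm hμ,
      sub_sub_cancel_left, abs_neg]
    exact Nat.abs_div_sub_count_dvd_le_one hj₀ n
  exact ⟨not_bddAbove_intCast_of_abs_sub_le hdev hup,
    not_bddBelow_intCast_of_abs_sub_le hdev hdown⟩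

end PeriodMeasure

theorem periodj_cocycle_oscillates_general
    (j : ℕ) (hj : 2 < j)
    (m : ℕ → Measure Bool)
    (hm : ∀ n, m n {true} =
      if j ∣ n then ((j : ℝ≥0∞) - 1) / j else 1 / (j : ℝ≥0∞))
    (μ : Measure (ℕ → Bool)) (hμ : IsProductMeasure μ m) :
    ∀ᵐ x ∂μ, {n : ℕ | x n = true}.Infinite ∧
      Filter.limsup
        (fun k => ∏ i ∈ Finset.range k, rPeriod j (Nat.nth (fun n => x n = true) i)) atTop = ⊤ ∧
      Filter.liminf
        (fun k => ∏ i ∈ Finset.range k, rPeriod j (Nat.nth (fun n => x n = true) i)) atTop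
        = 0 := by
  filter_upwards [ae_not_bddAbove_and_not_bddBelow_logCocycle_count hj hm hμ]
    with x ⟨hup, hdown⟩
  have hrange := range_comp_subset_range (Nat.count (x · = true)) (logCocycle j (x · = true))
  simp_rw [prod_rPeriod_nth_eq_zpow hj]
  exact ⟨Nat.infinite_setOf_of_not_bddAbove_comp_count hup,
    ENNReal.limsup_zpow_eq_top (ENNReal.one_lt_natCast_sub_one hj) fun h => hup (h.mono hrange),
    ENNReal.liminf_zpow_eq_zero (ENNReal.one_lt_natCast_sub_one hj) fun h => hdown (h.mono hrange)⟩

/-- fix `j > 2` and take the period-`j` product measure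
(`m n {1} = (j-1)/j` when `j ∣ n` and `1/j` otherwise).  Then almost every `x` has infinitely
many `1`s and its cocycle sequence `C k x = ∏_{i<k} rPeriod j (nᵢ x)` along the forward geodesic
of the least-deletion map oscillates: limsup `= ∞` and liminf `= 0`.  Here
`n₀ x < n₁ x < ⋯` (given by `Nat.nth`) enumerates `{n | x n = 1}`. -/
theorem periodj_cocycle_oscillates
    (j : ℕ) (hj : 2 < j)
    (m : ℕ → Measure Bool) (hprob : ∀ n, IsProbabilityMeasure (m n))
    (hm : ∀ n, m n {true} =
      if j ∣ n then ((j : ℝ≥0∞) - 1) / j else 1 / (j : ℝ≥0∞))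
    (μ : Measure (ℕ → Bool)) (hμ : IsProductMeasure μ m) :
    ∀ᵐ x ∂μ, {n : ℕ | x n = true}.Infinite ∧
      Filter.limsup
        (fun k => ∏ i ∈ Finset.range k, rPeriod j (Nat.nth (fun n => x n = true) i)) atTop = ⊤ ∧
      Filter.liminf
        (fun k => ∏ i ∈ Finset.range k, rPeriod j (Nat.nth (fun n => x n = true) i)) atTop
        = 0 :=
  periodj_cocycle_oscillates_general j hj m hm μ hμ
end

section
/- Let μ be the sparse measure on 2^ℕ (marginals m_{n_k}({1}) = 2^k/(2^k+1) along the sparse index sequence n_0 = 0, n_{k+1} = n_k + 2^{k·(Σ_{i≤k} i)}, and m_n({1}) = 1/2 otherwise). For x ∈ 2^ℕ with infinitely many 1s, let n_0(x) < n_1(x) < ⋯ enumerate {n : x(n) = 1}, let r(n) = 2^{−k} if n = n_k and r(n) = 1 otherwise, and set C_k(x) = ∏_{i=0}^{k−1} r(n_i(x)). Then for μ-almost every x ∈ 2^ℕ, the series Σ_{k=0}^∞ C_k(x) diverges to +∞; combined with the almost-sure convergence C_k(x) → 0, the Radon–Nikodym cocycle vanishes nonsummably along the forward geodesic of the least-deletion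 map. -/
open MeasureTheory Filter Set ENNReal

/-- The sparse index sequence: `n₀ = 0` and `n_{k+1} = n_k + 2 ^ (k · Σ_{i ≤ k} i)`. -/
def sparseSeq : ℕ → ℕ
  | 0 => 0
  | k + 1 => sparseSeq k + 2 ^ (k * ∑ i ∈ Finset.range (k + 1), i)

/-- `p_k = 2 ^ (Σ_{i ≤ k} i)`. -/
def sparseP (k : ℕ) : ℕ := 2 ^ (∑ i ∈ Finset.range (k + 1), i)

/-- The marginals of the sparse measure: `m (n_k) {1} = 2^k/(2^k+1)` along the sparse index
sequence, and `m n {1} = 1/2` for `n` not of the form `n_k`. -/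
def IsSparseMarginals (m : ℕ → Measure Bool) : Prop :=
  (∀ k : ℕ, m (sparseSeq k) {true} = (2 ^ k : ℝ≥0∞) / (2 ^ k + 1)) ∧
    ∀ n : ℕ, (∀ k : ℕ, n ≠ sparseSeq k) → m n {true} = 1 / 2

/-- The multiplicative jump `m n {0} / m n {1}` of the sparse measure: `r (n_k) = 2⁻ᵏ` along the
sparse index sequence and `r n = 1` otherwise. -/
def IsSparseJump (r : ℕ → ℝ≥0∞) : Prop :=
  (∀ k : ℕ, r (sparseSeq k) = ((2 : ℝ≥0∞) ^ k)⁻¹) ∧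
    ∀ n : ℕ, (∀ k : ℕ, n ≠ sparseSeq k) → r n = 1

/-- The number of indices `i` with `n_k < i < n_{k+1}` and `x i = 1`. -/
def onesBetween (x : ℕ → Bool) (k : ℕ) : ℕ :=
  ((Finset.Ioo (sparseSeq k) (sparseSeq (k + 1))).filter fun i => x i = true).card

/-!
Write `e_k = Σ_{i ≤ k} i`. For `k ≥ 2` the gap `(n_k, n_{k+1})`, of length `2 ^ (k e_k) - 1`,
contains `2 ^ e_k` disjoint groups of `e_k + k` fair coordinates. Some group of block `k` is
all zero with probability at most `2 ^ e_k · 2 ^ (-(e_k + k)) = 2 ^ (-k)`, so by Borel–Cantelli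
almost surely every group of every late block contains a one. Then block `k` holds at least
`2 ^ e_k` ones, and each cocycle value `C_j` with `j` at most the number of ones below `n_{k+1}`
is a product of factors `≤ 1` among which only `r (n_l) = 2 ^ (-l)`, `l ≤ k`, differ from `1`,
so `C_j ≥ 2 ^ (-e_k)`. Hence the `C_j` indexed by the ones of block `k` sum to at least `1`.
-/

open Finset

lemma Finset.prod_le_prod_of_le_one_of_eq_one {ι N : Type*} [CommMonoid N] [Preorder N]
    [MulLeftMono N] {f : ι → N} {s t : Finset ι} (hle : ∀ i ∈ t, f i ≤ 1)
    (heq : ∀ i ∈ s, i ∉ t → f i = 1) : ∏ i ∈ t, f i ≤ ∏ i ∈ s, f i := by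
  classical
  calc ∏ i ∈ t, f i ≤ ∏ i ∈ s ∩ t, f i :=
        prod_le_prod_of_subset_of_le_one' inter_subset_right fun i hi _ => hle i hi
    _ = ∏ i ∈ s, f i :=
        prod_subset inter_subset_left fun i hs hst => heq i hs fun ht => hst (mem_inter.2 ⟨hs, ht⟩)

lemma Finset.antitone_prod_range {N : Type*} [CommMonoid N] [Preorder N] [MulLeftMono N]
    {g : ℕ → N} (hg : ∀ i, g i ≤ 1) : Antitone fun k => ∏ i ∈ range k, g i :=
  antitone_nat_of_succ_le fun k => by
    rw [prod_range_succ]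
    exact mul_le_of_le_one_right' (hg k)

lemma Nat.prod_range_count_nth {M : Type*} [CommMonoid M] (p : ℕ → Prop) [DecidablePred p]
    (f : ℕ → M) (N : ℕ) :
    ∏ i ∈ range (count p N), f (nth p i) = ∏ n ∈ range N with p n, f n := by
  induction N with
  | zero => simp
  | succ N ih =>
    by_cases hN : p N
    · rw [count_succ_eq_succ_count_iff.2 hN, prod_range_succ, ih, nth_count hN, range_add_one,
        filter_insert, if_pos hN, prod_insert (by simp), mul_comm]
    · rw [count_succ_eq_count_iff.2 hN, range_add_one, filter_insert, if_neg hN, ih]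

lemma Nat.count_add_card_filter_Ico (p : ℕ → Prop) [DecidablePred p] {a b : ℕ} (hab : a ≤ b) :
    count p a + #{n ∈ Ico a b | p n} = count p b := by
  rw [count_eq_card_filter_range, count_eq_card_filter_range, range_eq_Ico, range_eq_Ico,
    ← card_union_of_disjoint (disjoint_filter_filter (Ico_disjoint_Ico_consecutive 0 a b)),
    ← filter_union, Finset.Ico_union_Ico_eq_Ico (Nat.zero_le a) hab]

lemma two_mul_add_one_le_two_pow {e : ℕ} (he : 3 ≤ e) : 2 * e + 1 ≤ 2 ^ e := by
  induction e, he using Nat.le_induction with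
  | base => norm_num
  | succ e he ih => rw [pow_succ]; omega

lemma ENNReal.tsum_eq_top_of_one_le_sum_Ico {a : ℕ → ℝ≥0∞} {T : ℕ → ℕ} (hT : Monotone T)
    (h : ∀ᶠ k in atTop, 1 ≤ ∑ j ∈ Ico (T k) (T (k + 1)), a j) : ∑' j, a j = ⊤ := by
  obtain ⟨K, hK⟩ := eventually_atTop.1 h
  have hblocks : ∀ N : ℕ, (N : ℝ≥0∞) ≤ ∑ j ∈ Ico (T K) (T (K + N)), a j := by
    intro N
    induction N with
    | zero => simp
    | succ N ih =>
      rw [← add_assoc, ← sum_Ico_consecutive _ (hT (Nat.le_add_right K N)) (hT (Nat.le_succ _)),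
        Nat.cast_succ]
      exact add_le_add ih (hK _ (Nat.le_add_right K N))
  refine top_unique (le_of_forall_lt fun c hc => ?_)
  obtain ⟨N, hN⟩ := ENNReal.exists_nat_gt hc.ne_top
  exact hN.trans_le ((hblocks N).trans (ENNReal.sum_le_tsum _))

lemma IsProductMeasure.measure_forall_eq_const {μ : Measure (ℕ → Bool)} {m : ℕ → Measure Bool}
    (hμ : IsProductMeasure μ m) {s : Finset ℕ} {b : Bool} {c : ℝ≥0∞}
    (hs : ∀ n ∈ s, m n {b} = c) : μ {x | ∀ n ∈ s, x n = b} = c ^ #s := by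
  rw [hμ s fun _ => b, prod_congr rfl hs, prod_const]

lemma sparseSeq_strictMono : StrictMono sparseSeq :=
  strictMono_nat_of_lt_succ fun _ => Nat.lt_add_of_pos_right (Nat.two_pow_pos _)

lemma sparseSeq_ne_of_mem_Ioo {k n : ℕ} (hn : n ∈ Finset.Ioo (sparseSeq k) (sparseSeq (k + 1)))
    (l : ℕ) : n ≠ sparseSeq l := by
  rintro rfl
  rw [Finset.mem_Ioo, sparseSeq_strictMono.lt_iff_lt, sparseSeq_strictMono.lt_iff_lt] at hn
  omega

def sparseExp (k : ℕ) : ℕ := ∑ i ∈ range (k + 1), i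

lemma le_sparseExp (k : ℕ) : k ≤ sparseExp k :=
  single_le_sum (f := id) (fun i _ => Nat.zero_le i) (self_mem_range_succ k)

lemma three_le_sparseExp {k : ℕ} (hk : 2 ≤ k) : 3 ≤ sparseExp k :=
  calc 3 = ∑ i ∈ range 3, i := by decide
    _ ≤ sparseExp k := sum_le_sum_of_subset (range_subset_range.2 (by omega))

def sparseGroup (k j : ℕ) : Finset ℕ :=
  Ico (sparseSeq k + 1 + j * (sparseExp k + k)) (sparseSeq k + 1 + (j + 1) * (sparseExp k + k))

lemma card_sparseGroup (k j : ℕ) : #(sparseGroup k j) = sparseExp k + k := by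
  rw [sparseGroup, Nat.card_Ico, add_mul, one_mul]
  omega

lemma pairwise_disjoint_sparseGroup (k : ℕ) :
    Pairwise fun i j => Disjoint (sparseGroup k i) (sparseGroup k j) := by
  intro i j hij
  rw [Finset.disjoint_left]
  intro n hi hj
  simp only [sparseGroup, Finset.mem_Ico] at hi hj
  have h1 : i * (sparseExp k + k) < (j + 1) * (sparseExp k + k) := by linarith [hi.1, hj.2]
  have h2 : j * (sparseExp k + k) < (i + 1) * (sparseExp k + k) := by linarith [hj.1, hi.2]
  have := Nat.lt_of_mul_lt_mul_right h1
  have := Nat.lt_of_mul_lt_mul_right h2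
  omega

lemma sparseSeq_add_two_pow_mul_le {k : ℕ} (hk : 2 ≤ k) :
    sparseSeq k + 1 + 2 ^ sparseExp k * (sparseExp k + k) ≤ sparseSeq (k + 1) := by
  have hke := le_sparseExp k
  have he := two_mul_add_one_le_two_pow (three_le_sparseExp hk)
  set e := sparseExp k
  have hlen : e + k + 1 ≤ 2 ^ e := by omega
  have hpow : 2 ^ e * 2 ^ e ≤ 2 ^ (k * e) := by
    rw [← pow_add]; exact Nat.pow_le_pow_right two_pos (by nlinarith)
  have : 2 ^ e * (e + k) + 1 ≤ 2 ^ e * 2 ^ e :=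
    calc 2 ^ e * (e + k) + 1 ≤ 2 ^ e * (e + k + 1) := by
          rw [mul_add_one]; exact Nat.add_le_add_left Nat.one_le_two_pow _
      _ ≤ 2 ^ e * 2 ^ e := Nat.mul_le_mul_left _ hlen
  show _ ≤ sparseSeq k + 2 ^ (k * e)
  omega

lemma sparseGroup_subset_Ioo {k j : ℕ} (hk : 2 ≤ k) (hj : j < 2 ^ sparseExp k) :
    sparseGroup k j ⊆ Finset.Ioo (sparseSeq k) (sparseSeq (k + 1)) := by
  intro n hn
  rw [sparseGroup, Finset.mem_Ico] at hn
  have := sparseSeq_add_two_pow_mul_le hk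
  have : (j + 1) * (sparseExp k + k) ≤ 2 ^ sparseExp k * (sparseExp k + k) :=
    Nat.mul_le_mul_right _ hj
  rw [Finset.mem_Ioo]
  omega

def GroupsHit (p : ℕ → Prop) (k : ℕ) : Prop :=
  ∀ j < 2 ^ sparseExp k, ∃ n ∈ sparseGroup k j, p n

lemma count_sparseSeq_add_two_pow_le {p : ℕ → Prop} [DecidablePred p] {k : ℕ} (hk : 2 ≤ k)
    (h : GroupsHit p k) :
    Nat.count p (sparseSeq k) + 2 ^ sparseExp k ≤ Nat.count p (sparseSeq (k + 1)) := by
  classical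
  rw [← Nat.count_add_card_filter_Ico p (sparseSeq_strictMono.monotone (Nat.le_succ k))]
  refine Nat.add_le_add_left ?_ _
  calc 2 ^ sparseExp k = ∑ _j ∈ range (2 ^ sparseExp k), 1 := by simp
    _ ≤ ∑ j ∈ range (2 ^ sparseExp k), #{n ∈ sparseGroup k j | p n} := by
        refine sum_le_sum fun j hj => card_pos.2 ?_
        obtain ⟨n, hn, hpn⟩ := h j (mem_range.1 hj)
        exact ⟨n, mem_filter.2 ⟨hn, hpn⟩⟩
    _ = #((range (2 ^ sparseExp k)).biUnion fun j => {n ∈ sparseGroup k j | p n}) :=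
        (card_biUnion fun i _ j _ hij =>
          disjoint_filter_filter (pairwise_disjoint_sparseGroup k hij)).symm
    _ ≤ #{n ∈ Ico (sparseSeq k) (sparseSeq (k + 1)) | p n} := by
        refine card_le_card (biUnion_subset.2 fun j hj => ?_)
        exact filter_subset_filter _
          ((sparseGroup_subset_Ioo hk (mem_range.1 hj)).trans Ioo_subset_Ico_self)

lemma IsSparseJump.le_one {r : ℕ → ℝ≥0∞} (hr : IsSparseJump r) (n : ℕ) : r n ≤ 1 := by
  by_cases h : ∃ k, n = sparseSeq k
  · obtain ⟨k, rfl⟩ := h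
    rw [hr.1 k]
    exact ENNReal.inv_le_one.2 (one_le_pow₀ one_le_two)
  · exact (hr.2 n fun k hk => h ⟨k, hk⟩).le

lemma IsSparseJump.inv_two_pow_le_prod {r : ℕ → ℝ≥0∞} (hr : IsSparseJump r)
    (p : ℕ → Prop) [DecidablePred p] (k : ℕ) :
    ((2 : ℝ≥0∞) ^ sparseExp k)⁻¹ ≤ ∏ n ∈ range (sparseSeq (k + 1)) with p n, r n := by
  classical
  calc ((2 : ℝ≥0∞) ^ sparseExp k)⁻¹ = ∏ l ∈ range (k + 1), r (sparseSeq l) := by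
        simp_rw [hr.1, ENNReal.inv_pow]
        rw [prod_pow_eq_pow_sum, sparseExp]
    _ = ∏ n ∈ (range (k + 1)).image sparseSeq, r n :=
        (prod_image fun _ _ _ _ h => sparseSeq_strictMono.injective h).symm
    _ ≤ ∏ n ∈ range (sparseSeq (k + 1)) with p n, r n := by
        refine prod_le_prod_of_le_one_of_eq_one (fun n _ => hr.le_one n) fun n hn hni => ?_
        refine hr.2 n fun l hl => hni (mem_image.2 ⟨l, Finset.mem_range.2 ?_, hl.symm⟩)
        rw [hl, mem_filter, Finset.mem_range, sparseSeq_strictMono.lt_iff_lt] at hn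
        exact hn.1

lemma one_le_sum_Ico_count {r : ℕ → ℝ≥0∞} (hr : IsSparseJump r) {p : ℕ → Prop}
    [DecidablePred p] {k : ℕ} (hk : 2 ≤ k) (h : GroupsHit p k) :
    1 ≤ ∑ j ∈ Ico (Nat.count p (sparseSeq k)) (Nat.count p (sparseSeq (k + 1))),
      ∏ i ∈ range j, r (Nat.nth p i) := by
  set a := Nat.count p (sparseSeq k)
  set b := Nat.count p (sparseSeq (k + 1))
  have hlow : ∀ j ∈ Finset.Ico a b,
      ((2 : ℝ≥0∞) ^ sparseExp k)⁻¹ ≤ ∏ i ∈ range j, r (Nat.nth p i) := fun j hj =>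
    calc ((2 : ℝ≥0∞) ^ sparseExp k)⁻¹ ≤ ∏ n ∈ range (sparseSeq (k + 1)) with p n, r n :=
          hr.inv_two_pow_le_prod p k
      _ = ∏ i ∈ range b, r (Nat.nth p i) := (Nat.prod_range_count_nth p r _).symm
      _ ≤ ∏ i ∈ range j, r (Nat.nth p i) :=
          antitone_prod_range (fun i => hr.le_one _) (Finset.mem_Ico.1 hj).2.le
  calc (1 : ℝ≥0∞) = (2 ^ sparseExp k : ℕ) * ((2 : ℝ≥0∞) ^ sparseExp k)⁻¹ := by
        push_cast
        exact (ENNReal.mul_inv_cancel (by positivity) (by simp)).symm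
    _ ≤ #(Finset.Ico a b) * ((2 : ℝ≥0∞) ^ sparseExp k)⁻¹ := by
        have := count_sparseSeq_add_two_pow_le hk h
        gcongr
        rw [Nat.card_Ico]
        omega
    _ ≤ ∑ j ∈ Finset.Ico a b, ∏ i ∈ range j, r (Nat.nth p i) := by
        rw [← nsmul_eq_mul]
        exact card_nsmul_le_sum _ _ _ hlow

lemma IsSparseJump.tsum_prod_nth_eq_top {r : ℕ → ℝ≥0∞} (hr : IsSparseJump r) {p : ℕ → Prop}
    [DecidablePred p] (h : ∀ᶠ k in atTop, GroupsHit p k) :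
    ∑' k, ∏ i ∈ range k, r (Nat.nth p i) = ⊤ :=
  ENNReal.tsum_eq_top_of_one_le_sum_Ico (T := fun k => Nat.count p (sparseSeq k))
    ((Nat.count_monotone p).comp sparseSeq_strictMono.monotone)
    (by filter_upwards [h, eventually_ge_atTop 2] with k hk h2 using one_le_sum_Ico_count hr h2 hk)

section Measure

variable {μ : Measure (ℕ → Bool)} {m : ℕ → Measure Bool}

lemma measure_not_groupsHit_le (hμ : IsProductMeasure μ m)
    (hhalf : ∀ n, (∀ k, n ≠ sparseSeq k) → m n {false} = 2⁻¹) {k : ℕ} (hk : 2 ≤ k) :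
    μ {x | ¬ GroupsHit (fun n => x n = true) k} ≤ 2⁻¹ ^ k := by
  have hsub : {x : ℕ → Bool | ¬ GroupsHit (fun n => x n = true) k} ⊆
      ⋃ j ∈ range (2 ^ sparseExp k), {x | ∀ n ∈ sparseGroup k j, x n = false} := by
    intro x hx
    simp only [GroupsHit, not_forall, not_exists, not_and, Bool.not_eq_true, mem_ofPred_eq] at hx
    obtain ⟨j, hj, hx⟩ := hx
    exact mem_iUnion₂.2 ⟨j, Finset.mem_range.2 hj, hx⟩
  calc μ {x | ¬ GroupsHit (fun n => x n = true) k}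
      ≤ ∑ j ∈ range (2 ^ sparseExp k), μ {x | ∀ n ∈ sparseGroup k j, x n = false} :=
        (measure_mono hsub).trans (measure_biUnion_finset_le _ _)
    _ = ∑ _j ∈ range (2 ^ sparseExp k), (2⁻¹ : ℝ≥0∞) ^ (sparseExp k + k) := by
        refine sum_congr rfl fun j hj => ?_
        rw [hμ.measure_forall_eq_const fun n hn => hhalf n ?_, card_sparseGroup]
        exact sparseSeq_ne_of_mem_Ioo (sparseGroup_subset_Ioo hk (Finset.mem_range.1 hj) hn)
    _ = 2⁻¹ ^ k := by
        rw [sum_const, card_range, nsmul_eq_mul, pow_add, ← mul_assoc, Nat.cast_pow,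
          Nat.cast_ofNat, ← mul_pow, ENNReal.mul_inv_cancel two_ne_zero ofNat_ne_top, one_pow,
          one_mul]

lemma ae_eventually_groupsHit (hμ : IsProductMeasure μ m)
    (hhalf : ∀ n, (∀ k, n ≠ sparseSeq k) → m n {false} = 2⁻¹) :
    ∀ᵐ x ∂μ, ∀ᶠ k in atTop, GroupsHit (fun n => x n = true) k := by
  have hsum : ∑' k, μ {x | ¬ GroupsHit (fun n => x n = true) (k + 2)} ≠ ⊤ := by
    refine ne_top_of_le_ne_top ?_ (ENNReal.tsum_le_tsum fun k =>
      (measure_not_groupsHit_le hμ hhalf (Nat.le_add_left 2 k)).trans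
        (pow_le_pow_right_of_le_one' (ENNReal.inv_le_one.2 one_le_two) (Nat.le_add_right k 2)))
    rw [ENNReal.tsum_geometric, ENNReal.one_sub_inv_two, inv_inv]
    exact ofNat_ne_top
  filter_upwards [ae_eventually_notMem hsum] with x hx
  filter_upwards [(tendsto_sub_atTop_nat 2).eventually hx, eventually_ge_atTop 2] with k hk h2
  simpa [Nat.sub_add_cancel h2] using hk

end Measure

/-- for the sparse product measure, for almost every `x` the series
`Σ_k C k x` of cocycle values along the forward geodesic of the least-deletion map diverges
to `+∞`, where `C k x = ∏_{i<k} r (nᵢ x)` and `n₀ x < n₁ x < ⋯` (given by `Nat.nth`) enumerates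
`{n | x n = 1}`. -/
theorem sparse_cocycle_nonsummable
    (m : ℕ → Measure Bool) (hprob : ∀ n, IsProbabilityMeasure (m n))
    (hm : IsSparseMarginals m)
    (r : ℕ → ℝ≥0∞) (hr : IsSparseJump r)
    (μ : Measure (ℕ → Bool)) (hμ : IsProductMeasure μ m) :
    ∀ᵐ x ∂μ,
      (∑' k : ℕ, ∏ i ∈ Finset.range k, r (Nat.nth (fun n => x n = true) i)) = ⊤ := by
  have hhalf : ∀ n, (∀ k, n ≠ sparseSeq k) → m n {false} = 2⁻¹ := fun n hn => by
    have := hprob n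
    rw [show ({false} : Set Bool) = {true}ᶜ by simp [Bool.compl_singleton],
      prob_compl_eq_one_sub (measurableSet_singleton _),
      hm.2 n hn, one_div, ENNReal.one_sub_inv_two]
  filter_upwards [ae_eventually_groupsHit hμ hhalf] with x hx
  exact hr.tsum_prod_nth_eq_top hx
end
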